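/- arXiv:2605.11929 — 4 statements merged into one kernel-verified Lean document; each statement's English description precedes it below -/
import Mathlib

section
/- Let f : ℝ^d → ℝ be continuous and bounded below with exp(-f/δ) ∈ L¹. Then the soft Moreau envelope f^{λ,δ}(x) = -δ log((2πλδ)^{-d/2} ∫ exp(-f(y)/δ) exp(-‖x-y‖²/(2λδ)) dy) is coercive: f^{λ,δ}(x) → +∞ as ‖x‖ → ∞. In particular f^{λ,δ} attains a minimizer on ℝ^d. -/
set_option maxHeartbeats 1000000


open MeasureTheory Real Filter

/-- The soft Moreau envelope is coercive and attains a minimizer. -/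
theorem softMoreauEnvelope_coercive_and_minimizer {d : ℕ}
    (f : EuclideanSpace ℝ (Fin d) → ℝ) (hf : Continuous f)
    (hbdd : ∃ c : ℝ, ∀ x, c ≤ f x)
    (δ lam : ℝ) (hδ : 0 < δ) (hlam : 0 < lam)
    (hint : Integrable (fun y : EuclideanSpace ℝ (Fin d) => Real.exp (-f y / δ)))
    (F : EuclideanSpace ℝ (Fin d) → ℝ)
    (hF : ∀ x, F x = -δ * Real.log ((2 * Real.pi * lam * δ) ^ (-(d : ℝ) / 2) *
          ∫ y : EuclideanSpace ℝ (Fin d),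
            Real.exp (-f y / δ) * Real.exp (-‖x - y‖ ^ 2 / (2 * lam * δ)))) :
    Tendsto F (Filter.comap norm Filter.atTop) Filter.atTop ∧
      ∃ xstar : EuclideanSpace ℝ (Fin d), ∀ x, F xstar ≤ F x := by
  set g : EuclideanSpace ℝ (Fin d) → ℝ := fun y => Real.exp (-f y / δ) with hg_def
  set C : ℝ := (2 * Real.pi * lam * δ) ^ (-(d : ℝ) / 2) with hC_def
  have hpi := Real.pi_pos
  have hC_pos : 0 < C := Real.rpow_pos_of_pos (by positivity) _
  have hlamδ : (0:ℝ) < 2 * lam * δ := by positivity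
  set k : EuclideanSpace ℝ (Fin d) → EuclideanSpace ℝ (Fin d) → ℝ := fun x y => Real.exp (-‖x - y‖ ^ 2 / (2 * lam * δ)) with hk_def
  have hg_pos : ∀ y, 0 < g y := fun y => Real.exp_pos _
  have hk_pos : ∀ x y, 0 < k x y := fun x y => Real.exp_pos _
  have hk_le_one : ∀ x y, k x y ≤ 1 := by
    intro x y
    rw [hk_def, Real.exp_le_one_iff]
    apply div_nonpos_of_nonpos_of_nonneg
    · simp [sq_nonneg]
    · positivity
  have hg_cont : Continuous g := Real.continuous_exp.comp ((hf.neg).div_const δ)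
  have hk_cont : Continuous fun p : EuclideanSpace ℝ (Fin d) × EuclideanSpace ℝ (Fin d) => k p.1 p.2 := by
    apply Real.continuous_exp.comp
    exact (((continuous_fst.sub continuous_snd).norm.pow 2).neg).div_const _
  clear_value g C k
  have hmeas : ∀ x : EuclideanSpace ℝ (Fin d), AEStronglyMeasurable (fun y => g y * k x y) volume := fun x =>
    (hg_cont.mul (hk_cont.comp (Continuous.prodMk_right x))).aestronglyMeasurable
  have h_bound : ∀ x : EuclideanSpace ℝ (Fin d), ∀ y : EuclideanSpace ℝ (Fin d), |g y * k x y| ≤ g y := by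
    intro x y
    rw [abs_of_nonneg (le_of_lt (mul_pos (hg_pos y) (hk_pos x y)))]
    calc g y * k x y ≤ g y * 1 :=
          mul_le_mul_of_nonneg_left (hk_le_one x y) (hg_pos y).le
      _ = g y := mul_one _
  have hint_x : ∀ x : EuclideanSpace ℝ (Fin d), Integrable (fun y => g y * k x y) := by
    intro x
    refine hint.mono' (hmeas x) (Filter.Eventually.of_forall ?_)
    intro y
    rw [Real.norm_eq_abs]
    exact h_bound x y
  set I : EuclideanSpace ℝ (Fin d) → ℝ := fun x => ∫ y, g y * k x y with hI_def
  clear_value I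
  have hI_pos : ∀ x, 0 < I x := by
    intro x
    rw [hI_def]
    rw [MeasureTheory.integral_pos_iff_support_of_nonneg
      (fun y => (mul_pos (hg_pos y) (hk_pos x y)).le) (hint_x x)]
    have hsupp : Function.support (fun y => g y * k x y) = Set.univ := by
      ext y
      simp only [Function.mem_support, Set.mem_univ, iff_true]
      exact (mul_pos (hg_pos y) (hk_pos x y)).ne'
    rw [hsupp]
    exact isOpen_univ.measure_pos volume ⟨0, trivial⟩
  have hI_cont : Continuous I := by
    have hbb : ∀ x : EuclideanSpace ℝ (Fin d),
        ∀ᵐ y : EuclideanSpace ℝ (Fin d), ‖g y * k x y‖ ≤ g y :=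
      fun x => Filter.Eventually.of_forall (fun y => by
        rw [Real.norm_eq_abs]; exact h_bound x y)
    have hcc : ∀ᵐ y : EuclideanSpace ℝ (Fin d),
        Continuous fun x : EuclideanSpace ℝ (Fin d) => g y * k x y :=
      Filter.Eventually.of_forall (fun y =>
        continuous_const.mul (hk_cont.comp (continuous_id.prodMk continuous_const)))
    rw [hI_def]
    exact continuous_of_dominated hmeas hbb hint hcc
  set T : ℝ := ∫ y, g y with hT_def
  clear_value T
  have hT_nonneg : 0 ≤ T := by
    rw [hT_def]; exact MeasureTheory.integral_nonneg (fun y => (hg_pos y).le)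
  -- decay of I at infinity
  have h_decay : ∀ ε : ℝ, 0 < ε → ∃ M : ℝ, ∀ x : EuclideanSpace ℝ (Fin d), M ≤ ‖x‖ → I x < ε := by
    intro ε hε
    have htail : Tendsto (fun n : ℕ => ∫ y in Metric.closedBall (0 : EuclideanSpace ℝ (Fin d)) n, g y)
        atTop (nhds T) := by
      have h1 : (⋃ n : ℕ, Metric.closedBall (0 : EuclideanSpace ℝ (Fin d)) n) = Set.univ :=
        Metric.iUnion_closedBall_nat 0
      have h2 := MeasureTheory.tendsto_setIntegral_of_monotone
        (f := g) (μ := volume) (s := fun n : ℕ => Metric.closedBall (0 : EuclideanSpace ℝ (Fin d)) n)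
        (fun n => measurableSet_closedBall)
        (fun m n hmn => Metric.closedBall_subset_closedBall (by exact_mod_cast hmn))
        (by rw [h1]; exact hint.integrableOn)
      rw [h1, MeasureTheory.setIntegral_univ, ← hT_def] at h2
      exact h2
    obtain ⟨R, hR⟩ : ∃ n : ℕ, T - ε / 2 < ∫ y in Metric.closedBall (0 : EuclideanSpace ℝ (Fin d)) n, g y :=
      (htail.eventually (eventually_gt_nhds (by linarith : T - ε / 2 < T))).exists
    have hcompl : ∫ y in (Metric.closedBall (0 : EuclideanSpace ℝ (Fin d)) R)ᶜ, g y < ε / 2 := by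
      have h3 := MeasureTheory.integral_add_compl
        (measurableSet_closedBall (x := (0 : EuclideanSpace ℝ (Fin d))) (ε := (R:ℝ))) hint
      have h4 : (∫ y in Metric.closedBall (0 : EuclideanSpace ℝ (Fin d)) R, g y)
          + ∫ y in (Metric.closedBall (0 : EuclideanSpace ℝ (Fin d)) R)ᶜ, g y = T := by
        rw [hT_def]; exact h3
      linarith
    have hMlim : Tendsto (fun M : ℝ => Real.exp (-(M - R) ^ 2 / (2 * lam * δ)) * (T + 1))
        atTop (nhds 0) := by
      have h1 : Tendsto (fun M : ℝ => (M - R) ^ 2) atTop atTop :=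
        (tendsto_pow_atTop (two_ne_zero)).comp (tendsto_atTop_add_const_right _ _ tendsto_id)
      have h2 : Tendsto (fun M : ℝ => -(M - R) ^ 2 / (2 * lam * δ)) atTop atBot :=
        Tendsto.atBot_div_const hlamδ (tendsto_neg_atTop_atBot.comp h1)
      have h3 := Real.tendsto_exp_atBot.comp h2
      simpa using h3.mul_const (T + 1)
    obtain ⟨M, hMR, hMexp⟩ : ∃ M : ℝ, (R:ℝ) ≤ M ∧
        Real.exp (-(M - R) ^ 2 / (2 * lam * δ)) * (T + 1) < ε / 2 := by
      have h1 : ∀ᶠ M : ℝ in atTop,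
          Real.exp (-(M - R) ^ 2 / (2 * lam * δ)) * (T + 1) < ε / 2 :=
        hMlim.eventually (eventually_lt_nhds (by linarith))
      have h2 : ∀ᶠ M : ℝ in atTop, (R:ℝ) ≤ M := eventually_ge_atTop _
      exact ((h2.and h1).exists).imp (fun M h => ⟨h.1, h.2⟩)
    refine ⟨M, fun x hx => ?_⟩
    have hsplit : I x = (∫ y in Metric.closedBall (0 : EuclideanSpace ℝ (Fin d)) R, g y * k x y)
        + ∫ y in (Metric.closedBall (0 : EuclideanSpace ℝ (Fin d)) R)ᶜ, g y * k x y := by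
      rw [hI_def]
      exact (MeasureTheory.integral_add_compl measurableSet_closedBall (hint_x x)).symm
    have hb1 : ∫ y in (Metric.closedBall (0 : EuclideanSpace ℝ (Fin d)) R)ᶜ, g y * k x y
        ≤ ∫ y in (Metric.closedBall (0 : EuclideanSpace ℝ (Fin d)) R)ᶜ, g y := by
      apply MeasureTheory.setIntegral_mono_on ((hint_x x).integrableOn)
        (hint.integrableOn) measurableSet_closedBall.compl
      intro y _
      calc g y * k x y ≤ g y * 1 :=
            mul_le_mul_of_nonneg_left (hk_le_one x y) (hg_pos y).le
        _ = g y := mul_one _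
    have hb2 : ∫ y in Metric.closedBall (0 : EuclideanSpace ℝ (Fin d)) R, g y * k x y
        ≤ Real.exp (-(M - R) ^ 2 / (2 * lam * δ)) * (T + 1) := by
      have hstep : ∫ y in Metric.closedBall (0 : EuclideanSpace ℝ (Fin d)) R, g y * k x y
          ≤ ∫ y in Metric.closedBall (0 : EuclideanSpace ℝ (Fin d)) R,
              g y * Real.exp (-(M - R) ^ 2 / (2 * lam * δ)) := by
        apply MeasureTheory.setIntegral_mono_on ((hint_x x).integrableOn)
          ((hint.mul_const _).integrableOn) measurableSet_closedBall
        intro y hy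
        apply mul_le_mul_of_nonneg_left _ (hg_pos y).le
        rw [hk_def, Real.exp_le_exp]
        have hyR : ‖y‖ ≤ (R:ℝ) := by
          simpa [Metric.mem_closedBall, dist_zero_right] using hy
        have hxy : M - R ≤ ‖x - y‖ := by
          have := norm_sub_norm_le x y
          linarith
        have hsq : (M - R) ^ 2 ≤ ‖x - y‖ ^ 2 :=
          pow_le_pow_left₀ (by linarith) hxy 2
        exact (div_le_div_iff_of_pos_right hlamδ).mpr (neg_le_neg hsq)
      have hstep2 : ∫ y in Metric.closedBall (0 : EuclideanSpace ℝ (Fin d)) R,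
            g y * Real.exp (-(M - R) ^ 2 / (2 * lam * δ))
          = (∫ y in Metric.closedBall (0 : EuclideanSpace ℝ (Fin d)) R, g y)
            * Real.exp (-(M - R) ^ 2 / (2 * lam * δ)) :=
        MeasureTheory.integral_mul_const _ _
      have hstep3 : ∫ y in Metric.closedBall (0 : EuclideanSpace ℝ (Fin d)) R, g y ≤ T := by
        rw [hT_def]
        exact MeasureTheory.setIntegral_le_integral hint
          (Filter.Eventually.of_forall (fun y => (hg_pos y).le))
      calc ∫ y in Metric.closedBall (0 : EuclideanSpace ℝ (Fin d)) R, g y * k x y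
          ≤ (∫ y in Metric.closedBall (0 : EuclideanSpace ℝ (Fin d)) R, g y)
            * Real.exp (-(M - R) ^ 2 / (2 * lam * δ)) := by rw [← hstep2]; exact hstep
        _ ≤ (T + 1) * Real.exp (-(M - R) ^ 2 / (2 * lam * δ)) := by
            apply mul_le_mul_of_nonneg_right (by linarith) (Real.exp_pos _).le
        _ = Real.exp (-(M - R) ^ 2 / (2 * lam * δ)) * (T + 1) := mul_comm _ _
    calc I x = _ := hsplit
      _ < ε := by linarith
  -- Tendsto I (comap norm atTop) (nhds 0)
  have hI_lim : Tendsto I (Filter.comap norm Filter.atTop) (nhds 0) := by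
    rw [Metric.tendsto_nhds]
    intro ε hε
    obtain ⟨M, hM⟩ := h_decay ε hε
    have hev : ∀ᶠ x : EuclideanSpace ℝ (Fin d) in Filter.comap norm Filter.atTop, M ≤ ‖x‖ :=
      tendsto_comap.eventually (eventually_ge_atTop M)
    filter_upwards [hev] with x hx
    rw [Real.dist_eq, sub_zero, abs_of_nonneg (by linarith [hI_pos x])]
    exact hM x hx
  -- Tendsto (C * I) to 0 within Ioi
  have hCI_lim : Tendsto (fun x => C * I x) (Filter.comap norm Filter.atTop)
      (nhdsWithin 0 (Set.Ioi 0)) := by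
    rw [tendsto_nhdsWithin_iff]
    constructor
    · have := hI_lim.const_mul C
      simpa using this
    · exact Filter.Eventually.of_forall (fun x => mul_pos hC_pos (hI_pos x))
  have hlog : Tendsto (fun x : EuclideanSpace ℝ (Fin d) => Real.log (C * I x))
      (Filter.comap norm Filter.atTop) atBot :=
    Real.tendsto_log_nhdsGT_zero.comp hCI_lim
  have hIeq : ∀ x : EuclideanSpace ℝ (Fin d),
      (∫ y : EuclideanSpace ℝ (Fin d),
        Real.exp (-f y / δ) * Real.exp (-‖x - y‖ ^ 2 / (2 * lam * δ))) = I x := by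
    intro x
    rw [hI_def]
    simp only [hg_def, hk_def]
  have hFeq : ∀ x : EuclideanSpace ℝ (Fin d), F x = -δ * Real.log (C * I x) := by
    intro x
    rw [hF x, hIeq x]
  have hFt : Tendsto F (Filter.comap norm Filter.atTop) Filter.atTop := by
    have h1 : Tendsto (fun x : EuclideanSpace ℝ (Fin d) => δ * (-Real.log (C * I x)))
        (Filter.comap norm Filter.atTop) atTop :=
      Tendsto.const_mul_atTop hδ (Filter.tendsto_neg_atBot_atTop.comp hlog)
    apply h1.congr
    intro x
    rw [hFeq x]; ring
  refine ⟨hFt, ?_⟩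
  have hF_cont : Continuous F := by
    have h1 : Continuous fun x : EuclideanSpace ℝ (Fin d) => -δ * Real.log (C * I x) := by
      apply continuous_const.mul
      exact (continuous_const.mul hI_cont).log
        (fun x => (mul_pos hC_pos (hI_pos x)).ne')
    exact h1.congr (fun x => (hFeq x).symm)
  apply hF_cont.exists_forall_le
  exact hFt.mono_left (tendsto_iff_comap.mp tendsto_norm_cocompact_atTop)
end

section
/- Let f : ℝ^d → ℝ be continuous and bounded below with exp(-f/δ) ∈ L¹. Define the zeroth-order proximal operator zprox(x) = (∫ y exp(-f(y)/δ) exp(-‖x-y‖²/(2λδ)) dy) / (∫ exp(-f(y)/δ) exp(-‖x-y‖²/(2λδ)) dy). Then the soft Moreau envelope f^{λ,δ} is differentiable and zprox(x) = x - λ ∇f^{λ,δ}(x) for every x. -/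
/-!
The normalising integral `Z` is the convolution of the integrable density `exp (-f / δ)` with a
Gaussian. Since `t * exp (-t ^ 2 / c)` is bounded, the derivative of the Gaussian is dominated by a
multiple of the density, so one may differentiate under the integral sign:
`∇Z x = -(1 / (λ δ)) ∫ w(y) (x - y) dy` with `w(y) = exp (-f y / δ) exp (-‖x - y‖² / (2 λ δ))`.
The chain rule for `-δ log` then gives `λ ∇f^{λ,δ}(x) = Z(x)⁻¹ ∫ w(y) (x - y) dy = x - zprox x`.
-/

open MeasureTheory Real

lemma mul_exp_neg_sq_div_le {c : ℝ} (hc : 0 < c) {t : ℝ} (ht : 0 ≤ t) :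
    t * exp (-t ^ 2 / c) ≤ √c / 2 := by
  have hden : 0 < 1 + t ^ 2 / c := by positivity
  have hexp : exp (-t ^ 2 / c) ≤ (1 + t ^ 2 / c)⁻¹ := by
    rw [neg_div, exp_neg]
    exact inv_anti₀ hden (by linarith [add_one_le_exp (t ^ 2 / c)])
  have hamgm : t ≤ √c / 2 * (1 + t ^ 2 / c) := by
    obtain ⟨s, hs, rfl⟩ : ∃ s, 0 < s ∧ c = s ^ 2 := ⟨√c, sqrt_pos.2 hc, (sq_sqrt hc.le).symm⟩
    rw [sqrt_sq hs.le]
    field_simp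
    nlinarith [sq_nonneg (t - s)]
  calc t * exp (-t ^ 2 / c) ≤ t * (1 + t ^ 2 / c)⁻¹ := mul_le_mul_of_nonneg_left hexp ht
    _ ≤ √c / 2 := by rw [mul_inv_le_iff₀ hden]; exact hamgm

section Gradient

variable {E : Type*} [NormedAddCommGroup E] [InnerProductSpace ℝ E] [CompleteSpace E]
  {f : E → ℝ} {v x : E}

theorem HasGradientAt.const_mul (a : ℝ) (h : HasGradientAt f v x) :
    HasGradientAt (fun x ↦ a * f x) (a • v) x := by
  rw [hasGradientAt_iff_hasFDerivAt] at h ⊢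
  exact (h.const_mul a).congr_fderiv (by ext; simp)

theorem HasGradientAt.log (h : HasGradientAt f v x) (hx : f x ≠ 0) :
    HasGradientAt (fun x ↦ Real.log (f x)) ((f x)⁻¹ • v) x := by
  rw [hasGradientAt_iff_hasFDerivAt] at h ⊢
  exact (h.log hx).congr_fderiv (by ext; simp)

end Gradient

section GaussianKernel

variable {E : Type*} [NormedAddCommGroup E] {c : ℝ}

noncomputable def gaussianKernel (c : ℝ) (x y : E) : ℝ := exp (-‖x - y‖ ^ 2 / c)

lemma gaussianKernel_pos (x y : E) : 0 < gaussianKernel c x y := exp_pos _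

lemma gaussianKernel_le_one (hc : 0 ≤ c) (x y : E) : gaussianKernel c x y ≤ 1 :=
  exp_le_one_iff.2 (div_nonpos_of_nonpos_of_nonneg (neg_nonpos.2 (sq_nonneg _)) hc)

@[fun_prop]
lemma continuous_gaussianKernel (x : E) : Continuous (gaussianKernel c x) := by
  unfold gaussianKernel
  fun_prop

lemma norm_sub_mul_gaussianKernel_le (hc : 0 < c) (x y : E) :
    ‖x - y‖ * gaussianKernel c x y ≤ √c / 2 :=
  mul_exp_neg_sq_div_le hc (norm_nonneg _)

lemma hasFDerivAt_gaussianKernel [InnerProductSpace ℝ E] (x y : E) :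
    HasFDerivAt (gaussianKernel c · y) ((-2 / c * gaussianKernel c x y) • innerSL ℝ (x - y)) x := by
  have := ((((hasFDerivAt_id x).sub_const y).norm_sq).neg.mul_const c⁻¹).exp
  refine this.congr_fderiv ?_
  ext z
  simp [gaussianKernel, div_eq_mul_inv]
  ring

end GaussianKernel

lemma integral_smul_sub_eq {E : Type*} [NormedAddCommGroup E] [NormedSpace ℝ E]
    [CompleteSpace E] [MeasurableSpace E] {μ : Measure E} {w : E → ℝ} (hw : Integrable w μ)
    (hwy : Integrable (fun y ↦ w y • y) μ) (x : E) :
    ∫ y, w y • (x - y) ∂μ = (∫ y, w y ∂μ) • x - ∫ y, w y • y ∂μ := by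
  simp_rw [smul_sub]
  rw [integral_sub (hw.smul_const x) hwy, integral_smul_const]

section Smoothing

variable {E : Type*} [NormedAddCommGroup E] [MeasurableSpace E] [OpensMeasurableSpace E]
  {μ : Measure E} {g : E → ℝ} {c : ℝ}

lemma MeasureTheory.Integrable.mul_gaussianKernel (hg : Integrable g μ) (hc : 0 ≤ c) (x : E) :
    Integrable (fun y ↦ g y * gaussianKernel c x y) μ :=
  hg.mul_bdd (continuous_gaussianKernel x).aestronglyMeasurable <| .of_forall fun y ↦ by
    rw [norm_of_nonneg (gaussianKernel_pos x y).le]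
    exact gaussianKernel_le_one hc x y

lemma integral_mul_gaussianKernel_pos [NeZero μ] (hg : Integrable g μ) (hg_pos : ∀ y, 0 < g y)
    (hc : 0 ≤ c) (x : E) : 0 < ∫ y, g y * gaussianKernel c x y ∂μ := by
  have hpos (y : E) : 0 < g y * gaussianKernel c x y := mul_pos (hg_pos y) (gaussianKernel_pos x y)
  rw [integral_pos_iff_support_of_nonneg (fun y ↦ (hpos y).le) (hg.mul_gaussianKernel hc x),
    Function.support_eq_univ fun y ↦ (hpos y).ne']
  exact Measure.measure_univ_pos.2 (NeZero.ne μ)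

variable [InnerProductSpace ℝ E] [SecondCountableTopology E]

lemma MeasureTheory.Integrable.mul_gaussianKernel_smul_sub (hg : Integrable g μ) (hc : 0 < c)
    (x : E) : Integrable (fun y ↦ (g y * gaussianKernel c x y) • (x - y)) μ := by
  simp_rw [mul_smul]
  refine hg.smul_bdd (√c / 2) (by fun_prop) (.of_forall fun y ↦ ?_)
  rw [norm_smul, norm_of_nonneg (gaussianKernel_pos x y).le, mul_comm]
  exact norm_sub_mul_gaussianKernel_le hc x y

lemma MeasureTheory.Integrable.mul_gaussianKernel_smul (hg : Integrable g μ) (hc : 0 < c) (x : E) :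
    Integrable (fun y ↦ (g y * gaussianKernel c x y) • y) μ := by
  refine (((hg.mul_gaussianKernel hc.le x).smul_const x).sub
    (hg.mul_gaussianKernel_smul_sub hc x)).congr (.of_forall fun y ↦ ?_)
  simp only [Pi.sub_apply, smul_sub, sub_sub_cancel]

theorem hasGradientAt_integral_mul_gaussianKernel [CompleteSpace E] (hg : Integrable g μ)
    (hc : 0 < c) (x : E) :
    HasGradientAt (fun x ↦ ∫ y, g y * gaussianKernel c x y ∂μ)
      ((-2 / c) • ∫ y, (g y * gaussianKernel c x y) • (x - y) ∂μ) x := by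
  set F' : E → E → E →L[ℝ] ℝ := fun x y ↦
    innerSL ℝ ((-2 / c) • ((g y * gaussianKernel c x y) • (x - y)))
  have hderiv (x y : E) : HasFDerivAt (fun x ↦ g y * gaussianKernel c x y) (F' x y) x :=
    ((hasFDerivAt_gaussianKernel x y).const_mul (g y)).congr_fderiv (by
      ext z; simp [F']; ring)
  have hbound (x y : E) : ‖F' x y‖ ≤ 2 / c * (‖g y‖ * (√c / 2)) := calc
    ‖F' x y‖ = 2 / c * (‖g y‖ * (‖x - y‖ * gaussianKernel c x y)) := by
      rw [innerSL_apply_norm, norm_smul, norm_smul, norm_mul,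
        norm_of_nonneg (gaussianKernel_pos x y).le, norm_div, norm_neg, Real.norm_two,
        norm_of_nonneg hc.le]
      ring
    _ ≤ 2 / c * (‖g y‖ * (√c / 2)) := by gcongr; exact norm_sub_mul_gaussianKernel_le hc x y
  have hvec_int : Integrable (fun y ↦ (-2 / c) • ((g y * gaussianKernel c x y) • (x - y))) μ :=
    (hg.mul_gaussianKernel_smul_sub hc x).smul (-2 / c)
  have hF'_int : Integrable (F' x) μ := (innerSL ℝ).integrable_comp hvec_int
  have h := hasFDerivAt_integral_of_dominated_of_fderiv_le Filter.univ_mem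
    (.of_forall fun x ↦ (hg.mul_gaussianKernel hc.le x).aestronglyMeasurable)
    (hg.mul_gaussianKernel hc.le x) hF'_int.aestronglyMeasurable
    (.of_forall fun y x _ ↦ hbound x y) ((hg.norm.mul_const _).const_mul _)
    (.of_forall fun y x _ ↦ hderiv x y)
  rw [hasGradientAt_iff_hasFDerivAt]
  refine h.congr_fderiv ?_
  rw [ContinuousLinearMap.integral_comp_comm _ hvec_int, integral_smul]
  -- `toDual ℝ E v` is `innerSL ℝ v` by construction
  rfl

end Smoothing

theorem zprox_eq_sub_grad_softMoreau_general {d : ℕ}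
    (f : EuclideanSpace ℝ (Fin d) → ℝ)
    (δ lam : ℝ) (hδ : 0 < δ) (hlam : 0 < lam)
    (hint : Integrable (fun y : EuclideanSpace ℝ (Fin d) => Real.exp (-f y / δ)))
    (Z : EuclideanSpace ℝ (Fin d) → ℝ)
    (hZ : ∀ x, Z x = ∫ y : EuclideanSpace ℝ (Fin d),
        Real.exp (-f y / δ) * Real.exp (-‖x - y‖ ^ 2 / (2 * lam * δ)))
    (F : EuclideanSpace ℝ (Fin d) → ℝ)
    (hF : ∀ x, F x = -δ * Real.log ((2 * Real.pi * lam * δ) ^ (-(d : ℝ) / 2) * Z x))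
    (zprox : EuclideanSpace ℝ (Fin d) → EuclideanSpace ℝ (Fin d))
    (hzprox : ∀ x, zprox x = (Z x)⁻¹ •
        ∫ y : EuclideanSpace ℝ (Fin d),
          (Real.exp (-f y / δ) * Real.exp (-‖x - y‖ ^ 2 / (2 * lam * δ))) • y) :
    ∀ x : EuclideanSpace ℝ (Fin d),
      DifferentiableAt ℝ F x ∧ zprox x = x - lam • gradient F x := by
  intro x
  have hc : 0 < 2 * lam * δ := by positivity
  have hZ_eq : Z = fun x ↦ ∫ y, exp (-f y / δ) * gaussianKernel (2 * lam * δ) x y := funext hZ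
  have hZ_pos : 0 < Z x := hZ_eq ▸ integral_mul_gaussianKernel_pos hint (fun _ ↦ exp_pos _) hc.le x
  have hgradZ := hasGradientAt_integral_mul_gaussianKernel hint hc x
  rw [← hZ_eq] at hgradZ
  have hgradF := ((hgradZ.const_mul ((2 * π * lam * δ) ^ (-(d : ℝ) / 2))).log
    (by positivity)).const_mul (-δ)
  rw [← funext hF] at hgradF
  refine ⟨hgradF.differentiableAt, ?_⟩
  rw [hgradF.gradient, hzprox, integral_smul_sub_eq (hint.mul_gaussianKernel hc.le x)
    (hint.mul_gaussianKernel_smul hc x)]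
  simp only [gaussianKernel, ← hZ]
  match_scalars
  · field_simp
  · field_simp
    ring

/-- The soft Moreau envelope is differentiable and the zeroth-order proximal operator
satisfies `zprox(x) = x - λ ∇f^{λ,δ}(x)`. -/
theorem zprox_eq_sub_grad_softMoreau {d : ℕ}
    (f : EuclideanSpace ℝ (Fin d) → ℝ) (hf : Continuous f)
    (hbdd : ∃ c : ℝ, ∀ x, c ≤ f x)
    (δ lam : ℝ) (hδ : 0 < δ) (hlam : 0 < lam)
    (hint : Integrable (fun y : EuclideanSpace ℝ (Fin d) => Real.exp (-f y / δ)))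
    (Z : EuclideanSpace ℝ (Fin d) → ℝ)
    (hZ : ∀ x, Z x = ∫ y : EuclideanSpace ℝ (Fin d),
        Real.exp (-f y / δ) * Real.exp (-‖x - y‖ ^ 2 / (2 * lam * δ)))
    (F : EuclideanSpace ℝ (Fin d) → ℝ)
    (hF : ∀ x, F x = -δ * Real.log ((2 * Real.pi * lam * δ) ^ (-(d : ℝ) / 2) * Z x))
    (zprox : EuclideanSpace ℝ (Fin d) → EuclideanSpace ℝ (Fin d))
    (hzprox : ∀ x, zprox x = (Z x)⁻¹ •
        ∫ y : EuclideanSpace ℝ (Fin d),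
          (Real.exp (-f y / δ) * Real.exp (-‖x - y‖ ^ 2 / (2 * lam * δ))) • y) :
    ∀ x : EuclideanSpace ℝ (Fin d),
      DifferentiableAt ℝ F x ∧ zprox x = x - lam • gradient F x :=
  zprox_eq_sub_grad_softMoreau_general f δ lam hδ hlam hint Z hZ F hF zprox hzprox
end

section
/- Let f : ℝ^d → ℝ be continuous and bounded below with exp(-f/δ) ∈ L¹. Then the Hessian of the soft Moreau envelope satisfies ∇²f^{λ,δ}(x) = (1/λ)I - (1/(λ²δ))Σ(x), where Σ(x) is the covariance matrix of the probability measure μ_x with density proportional to exp(-(f(y) + ‖x-y‖²/(2λ))/δ). In particular, if Σ(x) ⪯ λδ·I then ∇²f^{λ,δ}(x) ⪰ 0. -/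
/-!
Write `w(x, y) = exp (-(f y + ‖x - y‖² / (2λ)) / δ)`, `Z(x) = ∫ w(x, y) dy` and
`V(x) = ∫ w(x, y) (y - x) dy`, so that `f^{λ,δ} = -δ log (c Z)` and `μ_x = w(x, ·) / Z(x) dy`.
Since `∇ₓ w = w (y - x) / (λδ)`, differentiating under the integral sign gives
`∇Z = V / (λδ)`, hence `∇f^{λ,δ} = -V / (λZ) = (x - m(x)) / λ`, and one more differentiation gives
`DV = (λδ)⁻¹ ∫ w (y - x) ⊗ (y - x) - Z I`. By the quotient rule the quadratic form of the Hessian is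
`‖u‖² / λ - (λ²δ)⁻¹ (E[⟪u, y - x⟫²] - E[⟪u, y - x⟫]²)`, and the bracket is the variance of
`⟪u, y⟫` under `μ_x`. All derivatives under the integral are dominated by a multiple of
`exp (-f / δ)`, because `t² exp (-t² / (2λδ)) ≤ 2λδ`.
-/

open MeasureTheory Real
open scoped RealInnerProductSpace

section Integrals

variable {α H G : Type*} [MeasurableSpace α] {μ : Measure α}
  [NormedAddCommGroup H] [NormedSpace ℝ H] [NormedAddCommGroup G] [NormedSpace ℝ G]

theorem hasFDerivAt_integral_of_forall_norm_fderiv_le {F : H → α → G}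
    {F' : H → α → H →L[ℝ] G} {bound : α → ℝ} {x₀ : H}
    (hF_meas : ∀ x, AEStronglyMeasurable (F x) μ) (hF_int : Integrable (F x₀) μ)
    (hF'_meas : AEStronglyMeasurable (F' x₀) μ) (h_bound : ∀ x a, ‖F' x a‖ ≤ bound a)
    (bound_integrable : Integrable bound μ) (h_diff : ∀ x a, HasFDerivAt (F · a) (F' x a) x) :
    HasFDerivAt (fun x ↦ ∫ a, F x a ∂μ) (∫ a, F' x₀ a ∂μ) x₀ :=
  hasFDerivAt_integral_of_dominated_of_fderiv_le Filter.univ_mem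
    (Filter.Eventually.of_forall hF_meas) hF_int hF'_meas (ae_of_all _ fun a x _ ↦ h_bound x a)
    bound_integrable (ae_of_all _ fun a x _ ↦ h_diff x a)

theorem integral_mul_sub_sq {w X : α → ℝ}
    (hw : Integrable w μ) (hwX : Integrable (fun a ↦ w a * X a) μ)
    (hwX2 : Integrable (fun a ↦ w a * X a ^ 2) μ) (c : ℝ) :
    ∫ a, w a * (X a - c) ^ 2 ∂μ =
      ∫ a, w a * X a ^ 2 ∂μ - 2 * c * ∫ a, w a * X a ∂μ + c ^ 2 * ∫ a, w a ∂μ := by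
  have hexpand : (fun a ↦ w a * (X a - c) ^ 2) =
      fun a ↦ w a * X a ^ 2 - 2 * c * (w a * X a) + c ^ 2 * w a := by
    ext a; ring
  have hwX2_sub : Integrable (fun a ↦ w a * X a ^ 2 - 2 * c * (w a * X a)) μ :=
    hwX2.sub (hwX.const_mul _)
  rw [hexpand, integral_add hwX2_sub (hw.const_mul _), integral_sub hwX2 (hwX.const_mul _),
    integral_const_mul, integral_const_mul]

end Integrals

noncomputable section GibbsKernel

variable {E : Type*} [NormedAddCommGroup E] {f : E → ℝ} {δ lam : ℝ}

def gibbsKernel (f : E → ℝ) (δ lam : ℝ) (x y : E) : ℝ :=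
  exp (-(f y + ‖x - y‖ ^ 2 / (2 * lam)) / δ)

theorem gibbsKernel_pos (x y : E) : 0 < gibbsKernel f δ lam x y := exp_pos _

theorem gibbsKernel_eq_mul (x y : E) :
    gibbsKernel f δ lam x y = exp (-f y / δ) * exp (-(‖y - x‖ ^ 2 / (2 * (lam * δ)))) := by
  rw [gibbsKernel, ← exp_add, norm_sub_rev]
  ring_nf

theorem gibbsKernel_le (hδ : 0 < δ) (hlam : 0 < lam) (x y : E) :
    gibbsKernel f δ lam x y ≤ exp (-f y / δ) := by
  rw [gibbsKernel_eq_mul]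
  refine mul_le_of_le_one_right (exp_pos _).le (exp_le_one_iff.2 ?_)
  have : 0 ≤ ‖y - x‖ ^ 2 / (2 * (lam * δ)) := by positivity
  linarith

theorem gibbsKernel_mul_norm_sq_le (hδ : 0 < δ) (hlam : 0 < lam) (x y : E) :
    gibbsKernel f δ lam x y * ‖y - x‖ ^ 2 ≤ 2 * (lam * δ) * exp (-f y / δ) := by
  set t := ‖y - x‖ ^ 2 / (2 * (lam * δ))
  have hsq : ‖y - x‖ ^ 2 = 2 * (lam * δ) * t := by simp only [t]; field_simp
  have ht : t * exp (-t) ≤ 1 := (mul_exp_neg_le_exp_neg_one t).trans (by simp)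
  have hw : gibbsKernel f δ lam x y = exp (-f y / δ) * exp (-t) := gibbsKernel_eq_mul x y
  calc gibbsKernel f δ lam x y * ‖y - x‖ ^ 2
      = 2 * (lam * δ) * exp (-f y / δ) * (t * exp (-t)) := by rw [hw, hsq]; ring
    _ ≤ 2 * (lam * δ) * exp (-f y / δ) := mul_le_of_le_one_right (by positivity) ht

theorem gibbsKernel_mul_norm_le (hδ : 0 < δ) (hlam : 0 < lam) (x y : E) :
    gibbsKernel f δ lam x y * ‖y - x‖ ≤ (1 + 2 * (lam * δ)) * exp (-f y / δ) := by
  have hw := gibbsKernel_pos (f := f) (δ := δ) (lam := lam) x y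
  have hnorm : ‖y - x‖ ≤ 1 + ‖y - x‖ ^ 2 := by nlinarith [sq_nonneg (‖y - x‖ - 1)]
  calc gibbsKernel f δ lam x y * ‖y - x‖
      ≤ gibbsKernel f δ lam x y + gibbsKernel f δ lam x y * ‖y - x‖ ^ 2 := by nlinarith
    _ ≤ (1 + 2 * (lam * δ)) * exp (-f y / δ) := by
      linarith [gibbsKernel_le (f := f) hδ hlam x y,
        gibbsKernel_mul_norm_sq_le (f := f) hδ hlam x y]

variable [MeasurableSpace E] [OpensMeasurableSpace E] {ν : Measure E}

def gibbsPartition (f : E → ℝ) (δ lam : ℝ) (ν : Measure E) (x : E) : ℝ :=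
  ∫ y, gibbsKernel f δ lam x y ∂ν

theorem measurable_gibbsKernel (hf : Measurable f) (x : E) :
    Measurable (gibbsKernel f δ lam x) := by
  have hsq : Measurable fun y : E ↦ ‖x - y‖ ^ 2 :=
    (continuous_const.sub continuous_id).norm.pow 2 |>.measurable
  exact ((hf.add (hsq.div_const _)).neg.div_const _).exp

theorem integrable_gibbsKernel (hf : Measurable f) (hδ : 0 < δ) (hlam : 0 < lam)
    (hint : Integrable (fun y ↦ exp (-f y / δ)) ν) (x : E) :
    Integrable (gibbsKernel f δ lam x) ν :=
  hint.mono' (measurable_gibbsKernel hf x).aestronglyMeasurable (ae_of_all _ fun y ↦ by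
    rw [norm_of_nonneg (gibbsKernel_pos x y).le]
    exact gibbsKernel_le hδ hlam x y)

theorem gibbsPartition_pos [NeZero ν] (hf : Measurable f) (hδ : 0 < δ) (hlam : 0 < lam)
    (hint : Integrable (fun y ↦ exp (-f y / δ)) ν) (x : E) :
    0 < gibbsPartition f δ lam ν x := by
  have hsupp : Function.support (gibbsKernel f δ lam x) = Set.univ :=
    Set.eq_univ_of_forall fun y ↦ (gibbsKernel_pos x y).ne'
  rw [gibbsPartition, integral_pos_iff_support_of_nonneg (fun y ↦ (gibbsKernel_pos x y).le)
    (integrable_gibbsKernel hf hδ hlam hint x), hsupp, Measure.measure_univ_pos]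
  exact NeZero.ne ν

def gibbsMeasure (f : E → ℝ) (δ lam : ℝ) (ν : Measure E) (x : E) : Measure E :=
  ν.withDensity fun y ↦ ENNReal.ofReal (gibbsKernel f δ lam x y / gibbsPartition f δ lam ν x)

theorem integral_gibbsMeasure {G : Type*} [NormedAddCommGroup G] [NormedSpace ℝ G]
    (hf : Measurable f) (x : E) (g : E → G) :
    ∫ y, g y ∂gibbsMeasure f δ lam ν x =
      (gibbsPartition f δ lam ν x)⁻¹ • ∫ y, gibbsKernel f δ lam x y • g y ∂ν := by
  have hZ : 0 ≤ gibbsPartition f δ lam ν x := integral_nonneg fun y ↦ (gibbsKernel_pos x y).le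
  rw [gibbsMeasure, integral_withDensity_eq_integral_toReal_smul
    (((measurable_gibbsKernel hf x).div_const _).ennreal_ofReal)
    (ae_of_all _ fun _ ↦ ENNReal.ofReal_lt_top), ← integral_smul]
  congr 1 with y
  rw [ENNReal.toReal_ofReal (div_nonneg (gibbsKernel_pos x y).le hZ), smul_smul, div_eq_inv_mul]

end GibbsKernel

noncomputable section SoftMoreau

variable {E : Type*} [NormedAddCommGroup E] [InnerProductSpace ℝ E] {f : E → ℝ} {δ lam : ℝ}

theorem hasFDerivAt_gibbsKernel (hδ : 0 < δ) (hlam : 0 < lam) (x y : E) :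
    HasFDerivAt (gibbsKernel f δ lam · y)
      (innerSL ℝ ((lam * δ)⁻¹ • gibbsKernel f δ lam x y • (y - x))) x := by
  have hsq : HasFDerivAt (fun x : E ↦ ‖x - y‖ ^ 2) (2 • innerSL ℝ (x - y)) x := by
    simpa using ((hasFDerivAt_id x).sub_const y).norm_sq
  have hexp := ((hsq.const_mul (-(2 * lam * δ)⁻¹)).add_const (-f y / δ)).exp
  have hw : ∀ x, gibbsKernel f δ lam x y = exp (-(2 * lam * δ)⁻¹ * ‖x - y‖ ^ 2 + -f y / δ) := by
    intro x; rw [gibbsKernel]; ring_nf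
  simp only [hw] at hexp ⊢
  refine hexp.congr_fderiv (ContinuousLinearMap.ext fun u ↦ ?_)
  simp only [smul_apply, innerSL_apply_apply, smul_eq_mul, two_smul, add_apply,
    real_inner_smul_left, ← neg_sub x y, inner_neg_left]
  field_simp
  ring

def gibbsKernelSmulSubFDeriv (f : E → ℝ) (δ lam : ℝ) (x y : E) : E →L[ℝ] E :=
  (innerSL ℝ ((lam * δ)⁻¹ • gibbsKernel f δ lam x y • (y - x))).smulRight (y - x) -
    gibbsKernel f δ lam x y • ContinuousLinearMap.id ℝ E

theorem hasFDerivAt_gibbsKernel_smul_sub (hδ : 0 < δ) (hlam : 0 < lam) (x y : E) :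
    HasFDerivAt (fun x ↦ gibbsKernel f δ lam x y • (y - x))
      (gibbsKernelSmulSubFDeriv f δ lam x y) x := by
  refine ((hasFDerivAt_gibbsKernel hδ hlam x y).smul
    ((hasFDerivAt_id x).const_sub y)).congr_fderiv (ContinuousLinearMap.ext fun u ↦ ?_)
  simp only [gibbsKernelSmulSubFDeriv, add_apply, sub_apply, smul_apply, neg_apply,
    ContinuousLinearMap.smulRight_apply, ContinuousLinearMap.coe_id', id_eq, smul_neg]
  abel

theorem norm_gibbsKernelSmulSubFDeriv_le (hδ : 0 < δ) (hlam : 0 < lam) (x y : E) :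
    ‖gibbsKernelSmulSubFDeriv f δ lam x y‖ ≤ 3 * exp (-f y / δ) := by
  have hw := (gibbsKernel_pos (f := f) (δ := δ) (lam := lam) x y).le
  calc ‖gibbsKernelSmulSubFDeriv f δ lam x y‖
      ≤ (lam * δ)⁻¹ * (gibbsKernel f δ lam x y * ‖y - x‖ ^ 2) + gibbsKernel f δ lam x y := by
        refine (norm_sub_le _ _).trans (add_le_add (le_of_eq ?_) ?_)
        · rw [ContinuousLinearMap.norm_smulRight_apply, innerSL_apply_norm, norm_smul, norm_smul,
            norm_of_nonneg hw, norm_of_nonneg (by positivity)]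
          ring
        · rw [norm_smul, norm_of_nonneg hw]
          exact mul_le_of_le_one_right hw ContinuousLinearMap.norm_id_le
    _ ≤ (lam * δ)⁻¹ * (2 * (lam * δ) * exp (-f y / δ)) + exp (-f y / δ) :=
        add_le_add (mul_le_mul_of_nonneg_left (gibbsKernel_mul_norm_sq_le hδ hlam x y)
          (by positivity)) (gibbsKernel_le hδ hlam x y)
    _ = 3 * exp (-f y / δ) := by field_simp; ring

def gibbsDisplacement [MeasurableSpace E] (f : E → ℝ) (δ lam : ℝ) (ν : Measure E) (x : E) : E :=
  ∫ y, gibbsKernel f δ lam x y • (y - x) ∂ν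

variable [MeasurableSpace E] [BorelSpace E] {ν : Measure E}

theorem integrable_gibbsKernel_mul_inner_sq (hf : Measurable f) (hδ : 0 < δ) (hlam : 0 < lam)
    (hint : Integrable (fun y ↦ exp (-f y / δ)) ν) (x u : E) :
    Integrable (fun y ↦ gibbsKernel f δ lam x y * ⟪u, y - x⟫ ^ 2) ν := by
  refine (hint.const_mul (‖u‖ ^ 2 * (2 * (lam * δ)))).mono'
    ((measurable_gibbsKernel hf x).aestronglyMeasurable.mul
      ((continuous_const.inner (continuous_id.sub continuous_const)).pow 2).aestronglyMeasurable)
    (ae_of_all _ fun y ↦ ?_)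
  have hw := (gibbsKernel_pos (f := f) (δ := δ) (lam := lam) x y).le
  have hinner : ⟪u, y - x⟫ ^ 2 ≤ ‖u‖ ^ 2 * ‖y - x‖ ^ 2 := by
    rw [← mul_pow, ← sq_abs]
    exact pow_le_pow_left₀ (abs_nonneg _) (abs_real_inner_le_norm u (y - x)) 2
  rw [norm_of_nonneg (by positivity)]
  calc gibbsKernel f δ lam x y * ⟪u, y - x⟫ ^ 2
      ≤ ‖u‖ ^ 2 * (gibbsKernel f δ lam x y * ‖y - x‖ ^ 2) := by nlinarith
    _ ≤ ‖u‖ ^ 2 * (2 * (lam * δ) * exp (-f y / δ)) :=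
        mul_le_mul_of_nonneg_left (gibbsKernel_mul_norm_sq_le hδ hlam x y) (by positivity)
    _ = ‖u‖ ^ 2 * (2 * (lam * δ)) * exp (-f y / δ) := by ring

variable [SecondCountableTopology E]

theorem integrable_gibbsKernel_smul_sub (hf : Measurable f) (hδ : 0 < δ) (hlam : 0 < lam)
    (hint : Integrable (fun y ↦ exp (-f y / δ)) ν) (x : E) :
    Integrable (fun y ↦ gibbsKernel f δ lam x y • (y - x)) ν :=
  (hint.const_mul _).mono' ((measurable_gibbsKernel hf x).aestronglyMeasurable.smul
    (continuous_id.sub continuous_const).aestronglyMeasurable) (ae_of_all _ fun y ↦ by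
      rw [norm_smul, norm_of_nonneg (gibbsKernel_pos x y).le]
      exact gibbsKernel_mul_norm_le hδ hlam x y)

theorem integrable_gibbsKernel_mul_inner (hf : Measurable f) (hδ : 0 < δ) (hlam : 0 < lam)
    (hint : Integrable (fun y ↦ exp (-f y / δ)) ν) (x u : E) :
    Integrable (fun y ↦ gibbsKernel f δ lam x y * ⟪u, y - x⟫) ν := by
  simpa only [real_inner_smul_right] using
    (integrable_gibbsKernel_smul_sub hf hδ hlam hint x).const_inner (𝕜 := ℝ) u

theorem integrable_gibbsKernelSmulSubFDeriv (hf : Measurable f) (hδ : 0 < δ) (hlam : 0 < lam)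
    (hint : Integrable (fun y ↦ exp (-f y / δ)) ν) (x : E) :
    Integrable (gibbsKernelSmulSubFDeriv f δ lam x) ν := by
  have hw := (measurable_gibbsKernel hf x (δ := δ) (lam := lam)).aestronglyMeasurable (μ := ν)
  have hsub : AEStronglyMeasurable (fun y : E ↦ y - x) ν :=
    (continuous_id.sub continuous_const).aestronglyMeasurable
  have hinner := (innerSL ℝ).continuous.comp_aestronglyMeasurable
    ((hw.smul hsub).const_smul (lam * δ)⁻¹)
  refine (hint.const_mul 3).mono' ?_ (ae_of_all _ (norm_gibbsKernelSmulSubFDeriv_le hδ hlam x))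
  exact (isBoundedBilinearMap_smulRight.continuous.comp_aestronglyMeasurable
    (hinner.prodMk hsub)).sub (hw.smul aestronglyMeasurable_const)

theorem hasFDerivAt_gibbsDisplacement (hf : Measurable f) (hδ : 0 < δ) (hlam : 0 < lam)
    (hint : Integrable (fun y ↦ exp (-f y / δ)) ν) (x : E) :
    HasFDerivAt (gibbsDisplacement f δ lam ν) (∫ y, gibbsKernelSmulSubFDeriv f δ lam x y ∂ν) x :=
  hasFDerivAt_integral_of_forall_norm_fderiv_le
    (fun x ↦ (integrable_gibbsKernel_smul_sub hf hδ hlam hint x).aestronglyMeasurable)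
    (integrable_gibbsKernel_smul_sub hf hδ hlam hint x)
    (integrable_gibbsKernelSmulSubFDeriv hf hδ hlam hint x).aestronglyMeasurable
    (fun x y ↦ norm_gibbsKernelSmulSubFDeriv_le hδ hlam x y) (hint.const_mul 3)
    (fun x y ↦ hasFDerivAt_gibbsKernel_smul_sub hδ hlam x y)

variable [CompleteSpace E]

theorem hasFDerivAt_gibbsPartition (hf : Measurable f) (hδ : 0 < δ) (hlam : 0 < lam)
    (hint : Integrable (fun y ↦ exp (-f y / δ)) ν) (x : E) :
    HasFDerivAt (gibbsPartition f δ lam ν)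
      (innerSL ℝ ((lam * δ)⁻¹ • gibbsDisplacement f δ lam ν x)) x := by
  have hV : Integrable (fun y ↦ (lam * δ)⁻¹ • gibbsKernel f δ lam x y • (y - x)) ν :=
    (integrable_gibbsKernel_smul_sub hf hδ hlam hint x).smul (lam * δ)⁻¹
  have hderiv := hasFDerivAt_integral_of_forall_norm_fderiv_le
    (fun x ↦ (measurable_gibbsKernel hf x).aestronglyMeasurable)
    (integrable_gibbsKernel hf hδ hlam hint x)
    ((innerSL ℝ).continuous.comp_aestronglyMeasurable hV.aestronglyMeasurable)
    (fun x y ↦ ?_) (hint.const_mul ((lam * δ)⁻¹ * (1 + 2 * (lam * δ))))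
    (fun x y ↦ hasFDerivAt_gibbsKernel hδ hlam x y)
  · rwa [(innerSL ℝ).integral_comp_comm hV, integral_smul] at hderiv
  rw [innerSL_apply_norm, norm_smul, norm_smul, norm_of_nonneg (gibbsKernel_pos x y).le,
    norm_of_nonneg (by positivity), ← mul_assoc, mul_assoc, mul_assoc]
  exact mul_le_mul_of_nonneg_left (gibbsKernel_mul_norm_le hδ hlam x y) (by positivity)

theorem inner_gibbsDisplacement (hf : Measurable f) (hδ : 0 < δ) (hlam : 0 < lam)
    (hint : Integrable (fun y ↦ exp (-f y / δ)) ν) (x u : E) :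
    ⟪u, gibbsDisplacement f δ lam ν x⟫ = ∫ y, gibbsKernel f δ lam x y * ⟪u, y - x⟫ ∂ν := by
  rw [gibbsDisplacement, ← integral_inner (integrable_gibbsKernel_smul_sub hf hδ hlam hint x)]
  simp only [real_inner_smul_right]

theorem inner_integral_gibbsKernelSmulSubFDeriv_apply (hf : Measurable f) (hδ : 0 < δ)
    (hlam : 0 < lam) (hint : Integrable (fun y ↦ exp (-f y / δ)) ν) (x u : E) :
    ⟪u, (∫ y, gibbsKernelSmulSubFDeriv f δ lam x y ∂ν) u⟫ =
      (lam * δ)⁻¹ * ∫ y, gibbsKernel f δ lam x y * ⟪u, y - x⟫ ^ 2 ∂ν -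
        gibbsPartition f δ lam ν x * ‖u‖ ^ 2 := by
  have hA := integrable_gibbsKernelSmulSubFDeriv hf hδ hlam hint x
  rw [ContinuousLinearMap.integral_apply hA, ← integral_inner (hA.apply_continuousLinearMap u)]
  have hpt : ∀ y, ⟪u, gibbsKernelSmulSubFDeriv f δ lam x y u⟫ =
      (lam * δ)⁻¹ * (gibbsKernel f δ lam x y * ⟪u, y - x⟫ ^ 2) -
        gibbsKernel f δ lam x y * ‖u‖ ^ 2 := by
    intro y
    simp only [gibbsKernelSmulSubFDeriv, sub_apply, smul_apply, ContinuousLinearMap.smulRight_apply,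
      innerSL_apply_apply, ContinuousLinearMap.coe_id', id_eq, inner_sub_right,
      real_inner_smul_right, real_inner_self_eq_norm_sq, real_inner_comm u]
    ring
  simp only [hpt]
  rw [integral_sub ((integrable_gibbsKernel_mul_inner_sq hf hδ hlam hint x u).const_mul _)
    ((integrable_gibbsKernel hf hδ hlam hint x).mul_const _), integral_const_mul,
    integral_mul_const]
  rfl

theorem integral_id_gibbsMeasure [NeZero ν] (hf : Measurable f) (hδ : 0 < δ) (hlam : 0 < lam)
    (hint : Integrable (fun y ↦ exp (-f y / δ)) ν) (x : E) :
    ∫ y, y ∂gibbsMeasure f δ lam ν x =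
      x + (gibbsPartition f δ lam ν x)⁻¹ • gibbsDisplacement f δ lam ν x := by
  have hZ := gibbsPartition_pos hf hδ hlam hint x
  have hsplit : (fun y ↦ gibbsKernel f δ lam x y • y) =
      fun y ↦ gibbsKernel f δ lam x y • (y - x) + gibbsKernel f δ lam x y • x := by
    ext y; rw [← smul_add, sub_add_cancel]
  rw [integral_gibbsMeasure hf, hsplit,
    integral_add (integrable_gibbsKernel_smul_sub hf hδ hlam hint x)
    ((integrable_gibbsKernel hf hδ hlam hint x).smul_const x), integral_smul_const, smul_add,
    smul_smul, ← gibbsPartition, inv_mul_cancel₀ hZ.ne', one_smul, add_comm, gibbsDisplacement]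

theorem integral_inner_sub_sq_gibbsMeasure [NeZero ν] (hf : Measurable f) (hδ : 0 < δ)
    (hlam : 0 < lam) (hint : Integrable (fun y ↦ exp (-f y / δ)) ν) (x u : E) :
    ∫ y, ⟪u, y - ∫ z, z ∂gibbsMeasure f δ lam ν x⟫ ^ 2 ∂gibbsMeasure f δ lam ν x =
      (∫ y, gibbsKernel f δ lam x y * ⟪u, y - x⟫ ^ 2 ∂ν) / gibbsPartition f δ lam ν x -
        ((∫ y, gibbsKernel f δ lam x y * ⟪u, y - x⟫ ∂ν) / gibbsPartition f δ lam ν x) ^ 2 := by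
  have hZ := gibbsPartition_pos hf hδ hlam hint x
  set a := (∫ y, gibbsKernel f δ lam x y * ⟪u, y - x⟫ ∂ν) / gibbsPartition f δ lam ν x with ha
  have hcentered : ∀ y, ⟪u, y - ∫ z, z ∂gibbsMeasure f δ lam ν x⟫ = ⟪u, y - x⟫ - a := by
    intro y
    rw [integral_id_gibbsMeasure hf hδ hlam hint x, sub_add_eq_sub_sub, inner_sub_right,
      real_inner_smul_right, inner_gibbsDisplacement hf hδ hlam hint, ha, inv_mul_eq_div]
  simp only [hcentered]
  rw [integral_gibbsMeasure hf]
  simp only [smul_eq_mul]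
  rw [integral_mul_sub_sq (integrable_gibbsKernel hf hδ hlam hint x)
    (integrable_gibbsKernel_mul_inner hf hδ hlam hint x u)
    (integrable_gibbsKernel_mul_inner_sq hf hδ hlam hint x u), ← gibbsPartition]
  have hmoment : ∫ y, gibbsKernel f δ lam x y * ⟪u, y - x⟫ ∂ν = a * gibbsPartition f δ lam ν x := by
    rw [ha, div_mul_cancel₀ _ hZ.ne']
  rw [hmoment]
  field_simp
  ring

/-- `c` plays the role of the Gaussian normalisation `(2πλδ)^(-d/2)`. -/
def softMoreau (f : E → ℝ) (δ lam c : ℝ) (ν : Measure E) (x : E) : ℝ :=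
  -δ * log (c * gibbsPartition f δ lam ν x)

def softMoreauHessian (f : E → ℝ) (δ lam : ℝ) (ν : Measure E) (x : E) :
    E →L[ℝ] E :=
  -(lam * gibbsPartition f δ lam ν x)⁻¹ • ∫ y, gibbsKernelSmulSubFDeriv f δ lam x y ∂ν +
    (innerSL ℝ ((lam ^ 2 * δ * gibbsPartition f δ lam ν x ^ 2)⁻¹ •
      gibbsDisplacement f δ lam ν x)).smulRight (gibbsDisplacement f δ lam ν x)

variable [NeZero ν] {c : ℝ}

theorem hasGradientAt_softMoreau (hc : 0 < c) (hf : Measurable f) (hδ : 0 < δ) (hlam : 0 < lam)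
    (hint : Integrable (fun y ↦ exp (-f y / δ)) ν) (x : E) :
    HasGradientAt (softMoreau f δ lam c ν)
      (-(lam * gibbsPartition f δ lam ν x)⁻¹ • gibbsDisplacement f δ lam ν x) x := by
  have hZ := gibbsPartition_pos hf hδ hlam hint x
  have hlog := (((hasFDerivAt_gibbsPartition hf hδ hlam hint x).const_mul c).log
    (by positivity)).const_mul (-δ)
  rw [hasGradientAt_iff_hasFDerivAt]
  refine hlog.congr_fderiv (ContinuousLinearMap.ext fun u ↦ ?_)
  simp only [smul_apply, innerSL_apply_apply, InnerProductSpace.toDual_apply_apply, smul_eq_mul,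
    real_inner_smul_left]
  field_simp

theorem gradient_softMoreau (hc : 0 < c) (hf : Measurable f) (hδ : 0 < δ) (hlam : 0 < lam)
    (hint : Integrable (fun y ↦ exp (-f y / δ)) ν) :
    gradient (softMoreau f δ lam c ν) =
      fun x ↦ -(lam * gibbsPartition f δ lam ν x)⁻¹ • gibbsDisplacement f δ lam ν x :=
  funext fun x ↦ (hasGradientAt_softMoreau hc hf hδ hlam hint x).gradient

theorem hasFDerivAt_gradient_softMoreau (hc : 0 < c) (hf : Measurable f) (hδ : 0 < δ)
    (hlam : 0 < lam) (hint : Integrable (fun y ↦ exp (-f y / δ)) ν) (x : E) :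
    HasFDerivAt (gradient (softMoreau f δ lam c ν)) (softMoreauHessian f δ lam ν x) x := by
  have hZ := gibbsPartition_pos hf hδ hlam hint x
  have hlamZ : lam * gibbsPartition f δ lam ν x ≠ 0 := by positivity
  have hinv := ((hasDerivAt_inv hlamZ).comp_hasFDerivAt x
    ((hasFDerivAt_gibbsPartition hf hδ hlam hint x).const_mul lam)).neg
  rw [gradient_softMoreau hc hf hδ hlam hint]
  refine (hinv.smul (hasFDerivAt_gibbsDisplacement hf hδ hlam hint x)).congr_fderiv
    (ContinuousLinearMap.ext fun u ↦ ?_)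
  simp only [softMoreauHessian, add_apply, smul_apply, neg_apply,
    ContinuousLinearMap.smulRight_apply, innerSL_apply_apply, real_inner_smul_left, smul_eq_mul, Pi.neg_apply, Function.comp_apply]
  congr 2
  field_simp

theorem inner_softMoreauHessian_apply (hf : Measurable f) (hδ : 0 < δ) (hlam : 0 < lam)
    (hint : Integrable (fun y ↦ exp (-f y / δ)) ν) (x u : E) :
    ⟪u, softMoreauHessian f δ lam ν x u⟫ = 1 / lam * ‖u‖ ^ 2 - 1 / (lam ^ 2 * δ) *
      ∫ y, ⟪u, y - ∫ z, z ∂gibbsMeasure f δ lam ν x⟫ ^ 2 ∂gibbsMeasure f δ lam ν x := by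
  have hZ := gibbsPartition_pos hf hδ hlam hint x
  simp only [softMoreauHessian, add_apply, smul_apply, ContinuousLinearMap.smulRight_apply,
    innerSL_apply_apply, inner_add_right, real_inner_smul_right, real_inner_smul_left]
  rw [inner_integral_gibbsKernelSmulSubFDeriv_apply hf hδ hlam hint,
    integral_inner_sub_sq_gibbsMeasure hf hδ hlam hint, real_inner_comm u,
    inner_gibbsDisplacement hf hδ hlam hint]
  field_simp
  ring

end SoftMoreau

theorem hessian_softMoreau_identity_general {d : ℕ}
    (f : EuclideanSpace ℝ (Fin d) → ℝ) (hf : Continuous f)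
    (δ lam : ℝ) (hδ : 0 < δ) (hlam : 0 < lam)
    (hint : Integrable (fun y : EuclideanSpace ℝ (Fin d) => Real.exp (-f y / δ)))
    (F : EuclideanSpace ℝ (Fin d) → ℝ)
    (hF : ∀ x, F x = -δ * Real.log ((2 * Real.pi * lam * δ) ^ (-(d : ℝ) / 2) *
          ∫ y : EuclideanSpace ℝ (Fin d),
            Real.exp (-(f y + ‖x - y‖ ^ 2 / (2 * lam)) / δ)))
    (Z : EuclideanSpace ℝ (Fin d) → ℝ)
    (hZ : ∀ x, Z x = ∫ y : EuclideanSpace ℝ (Fin d),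
        Real.exp (-(f y + ‖x - y‖ ^ 2 / (2 * lam)) / δ))
    (μ : EuclideanSpace ℝ (Fin d) → Measure (EuclideanSpace ℝ (Fin d)))
    (hμ : ∀ x, μ x = volume.withDensity (fun y =>
        ENNReal.ofReal (Real.exp (-(f y + ‖x - y‖ ^ 2 / (2 * lam)) / δ) / Z x)))
    (m : EuclideanSpace ℝ (Fin d) → EuclideanSpace ℝ (Fin d))
    (hm : ∀ x, m x = ∫ y, y ∂(μ x)) :
    ∀ x : EuclideanSpace ℝ (Fin d),
      DifferentiableAt ℝ (gradient F) x ∧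
      (∀ u : EuclideanSpace ℝ (Fin d),
        ⟪u, fderiv ℝ (gradient F) x u⟫ =
          (1 / lam) * ‖u‖ ^ 2 - (1 / (lam ^ 2 * δ)) * ∫ y, ⟪u, y - m x⟫ ^ 2 ∂(μ x)) ∧
      ((∀ u : EuclideanSpace ℝ (Fin d),
          (∫ y, ⟪u, y - m x⟫ ^ 2 ∂(μ x)) ≤ lam * δ * ‖u‖ ^ 2) →
        ∀ u : EuclideanSpace ℝ (Fin d), 0 ≤ ⟪u, fderiv ℝ (gradient F) x u⟫) := by
  intro x
  have hc : 0 < (2 * π * lam * δ) ^ (-(d : ℝ) / 2) := by positivity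
  have hFeq : F = softMoreau f δ lam ((2 * π * lam * δ) ^ (-(d : ℝ) / 2)) volume := funext hF
  have hμeq : μ = gibbsMeasure f δ lam volume := funext fun x ↦ by rw [hμ, hZ]; rfl
  have hmeq : m = fun x ↦ ∫ y, y ∂gibbsMeasure f δ lam volume x := by rw [← hμeq]; exact funext hm
  subst hFeq hμeq hmeq
  have hH := hasFDerivAt_gradient_softMoreau hc hf.measurable hδ hlam hint x
  have hquad (u) := hH.fderiv ▸ inner_softMoreauHessian_apply hf.measurable hδ hlam hint x u
  refine ⟨hH.differentiableAt, hquad, fun hcov u ↦ ?_⟩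
  have hcov' := mul_le_mul_of_nonneg_left (hcov u) (by positivity : 0 ≤ 1 / (lam ^ 2 * δ))
  have hscale : 1 / (lam ^ 2 * δ) * (lam * δ * ‖u‖ ^ 2) = 1 / lam * ‖u‖ ^ 2 := by
    field_simp
  rw [hquad u]
  linarith

/-- Hessian identity for the soft Moreau envelope:
`∇²f^{λ,δ}(x) = (1/λ)I - (1/(λ²δ))Σ(x)` (as quadratic forms), where `Σ(x)` is the
covariance of the localized Gibbs measure `μ_x`; in particular `Σ(x) ⪯ λδ·I` implies
`∇²f^{λ,δ}(x) ⪰ 0`. -/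
theorem hessian_softMoreau_identity {d : ℕ}
    (f : EuclideanSpace ℝ (Fin d) → ℝ) (hf : Continuous f)
    (hbdd : ∃ c : ℝ, ∀ x, c ≤ f x)
    (δ lam : ℝ) (hδ : 0 < δ) (hlam : 0 < lam)
    (hint : Integrable (fun y : EuclideanSpace ℝ (Fin d) => Real.exp (-f y / δ)))
    (F : EuclideanSpace ℝ (Fin d) → ℝ)
    (hF : ∀ x, F x = -δ * Real.log ((2 * Real.pi * lam * δ) ^ (-(d : ℝ) / 2) *
          ∫ y : EuclideanSpace ℝ (Fin d),
            Real.exp (-(f y + ‖x - y‖ ^ 2 / (2 * lam)) / δ)))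
    (Z : EuclideanSpace ℝ (Fin d) → ℝ)
    (hZ : ∀ x, Z x = ∫ y : EuclideanSpace ℝ (Fin d),
        Real.exp (-(f y + ‖x - y‖ ^ 2 / (2 * lam)) / δ))
    (μ : EuclideanSpace ℝ (Fin d) → Measure (EuclideanSpace ℝ (Fin d)))
    (hμ : ∀ x, μ x = volume.withDensity (fun y =>
        ENNReal.ofReal (Real.exp (-(f y + ‖x - y‖ ^ 2 / (2 * lam)) / δ) / Z x)))
    (m : EuclideanSpace ℝ (Fin d) → EuclideanSpace ℝ (Fin d))
    (hm : ∀ x, m x = ∫ y, y ∂(μ x)) :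
    ∀ x : EuclideanSpace ℝ (Fin d),
      DifferentiableAt ℝ (gradient F) x ∧
      (∀ u : EuclideanSpace ℝ (Fin d),
        ⟪u, fderiv ℝ (gradient F) x u⟫ =
          (1 / lam) * ‖u‖ ^ 2 - (1 / (lam ^ 2 * δ)) * ∫ y, ⟪u, y - m x⟫ ^ 2 ∂(μ x)) ∧
      ((∀ u : EuclideanSpace ℝ (Fin d),
          (∫ y, ⟪u, y - m x⟫ ^ 2 ∂(μ x)) ≤ lam * δ * ‖u‖ ^ 2) →
        ∀ u : EuclideanSpace ℝ (Fin d), 0 ≤ ⟪u, fderiv ℝ (gradient F) x u⟫) :=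
  hessian_softMoreau_identity_general f hf δ lam hδ hlam hint F hF Z hZ μ hμ m hm
end

section
/- Let f : ℝ^d → ℝ be continuous and bounded below with exp(-f/δ) ∈ L¹, and suppose the soft Moreau envelope f^{λ,δ} is convex. Then f^{λ,δ} is (1/λ)-smooth (its gradient is (1/λ)-Lipschitz), and the ZOPPA iteration x^{k+1} = x^k - λ∇f^{λ,δ}(x^k) satisfies, for every k ≥ 1, f^{λ,δ}(x^k) - min f^{λ,δ} ≤ dist(x^0, X⋆)²/(2λk), where X⋆ = argmin f^{λ,δ} (assumed nonempty). -/
/-!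
Expanding `‖x - y‖² = ‖x‖² - 2⟪x, y⟫ + ‖y‖²` shows that `‖x‖²/(2λ) - f^{λ,δ}(x)` is, up to an
additive constant, `δ` times the logarithm of a Laplace transform `w ↦ ∫ exp (h y + ⟪w, y⟫) dy`
evaluated at `w = x/(λδ)`. Such a function is convex by Hölder's inequality, so `f^{λ,δ}` is
sandwiched between two convex functions: it is convex by assumption and `‖x‖²/(2λ) - f^{λ,δ}` is
convex. For a differentiable function this sandwich gives the descent lemma
`F y ≤ F x + ⟪∇F x, y - x⟫ + ‖y - x‖²/(2λ)` and then co-coercivity of `∇F`, hence `∇F` is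
`(1/λ)`-Lipschitz. Gradient descent with step `λ` then decreases
`2λk (F(x^k) - F z) + ‖x^k - z‖²` at every step, which gives the `O(1/k)` rate.
-/

open MeasureTheory Real Set
open scoped RealInnerProductSpace

theorem integral_rpow_mul_rpow_le {α : Type*} [MeasurableSpace α] {μ : Measure α}
    {a b : α → ℝ} (ha : 0 ≤ a) (hb : 0 ≤ b) (hai : Integrable a μ) (hbi : Integrable b μ)
    {s t : ℝ} (hs : 0 < s) (ht : 0 < t) (hst : s + t = 1) :
    ∫ x, a x ^ s * b x ^ t ∂μ ≤ (∫ x, a x ∂μ) ^ s * (∫ x, b x ∂μ) ^ t := by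
  have hmem : ∀ {c : α → ℝ} {r : ℝ}, 0 ≤ c → Integrable c μ → 0 < r →
      MemLp (fun x => c x ^ r) (ENNReal.ofReal (1 / r)) μ := by
    intro c r hc hci hr
    have hr0 : ENNReal.ofReal r ≠ 0 := by simpa using hr
    have := (memLp_norm_rpow_iff hci.aestronglyMeasurable hr0 ENNReal.ofReal_ne_top).2
      (memLp_one_iff_integrable.2 hci)
    rwa [ENNReal.toReal_ofReal hr.le, one_div, ← ENNReal.ofReal_inv_of_pos hr,
      show (fun x => ‖c x‖ ^ r) = fun x => c x ^ r from
        funext fun x => by rw [norm_of_nonneg (hc x)], ← one_div] at this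
  have hH := integral_mul_le_Lp_mul_Lq_of_nonneg (holderConjugate_one_div hs ht hst)
    (ae_of_all _ fun x => rpow_nonneg (ha x) s) (ae_of_all _ fun x => rpow_nonneg (hb x) t)
    (hmem ha hai hs) (hmem hb hbi ht)
  simpa only [one_div, inv_inv, rpow_rpow_inv (ha _) hs.ne', rpow_rpow_inv (hb _) ht.ne']
    using hH

theorem convexOn_log_integral_exp_add_inner {E : Type*} [NormedAddCommGroup E]
    [InnerProductSpace ℝ E] [MeasurableSpace E] {μ : Measure E} [NeZero μ] (h : E → ℝ)
    (hint : ∀ x, Integrable (fun y => exp (h y + ⟪x, y⟫)) μ) :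
    ConvexOn ℝ univ fun x => log (∫ y, exp (h y + ⟪x, y⟫) ∂μ) := by
  refine convexOn_iff_forall_pos.2 ⟨convex_univ, fun p _ q _ s t hs ht hst => ?_⟩
  have hexp : ∀ y, exp (h y + ⟪s • p + t • q, y⟫)
      = exp (h y + ⟪p, y⟫) ^ s * exp (h y + ⟪q, y⟫) ^ t := fun y => by
    rw [← exp_mul, ← exp_mul, ← exp_add, inner_add_left, real_inner_smul_left,
      real_inner_smul_left]
    congr 1
    linear_combination -h y * hst
  have hH := integral_rpow_mul_rpow_le (fun y => (exp_pos _).le) (fun y => (exp_pos _).le)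
    (hint p) (hint q) hs ht hst
  simp only [← hexp] at hH
  have hp := integral_exp_pos (hint p)
  have hq := integral_exp_pos (hint q)
  calc log (∫ y, exp (h y + ⟪s • p + t • q, y⟫) ∂μ)
      ≤ log ((∫ y, exp (h y + ⟪p, y⟫) ∂μ) ^ s * (∫ y, exp (h y + ⟪q, y⟫) ∂μ) ^ t) :=
        log_le_log (integral_exp_pos (hint _)) hH
    _ = s • log (∫ y, exp (h y + ⟪p, y⟫) ∂μ) + t • log (∫ y, exp (h y + ⟪q, y⟫) ∂μ) := by
        rw [log_mul (rpow_pos_of_pos hp s).ne' (rpow_pos_of_pos hq t).ne', log_rpow hp,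
          log_rpow hq, smul_eq_mul, smul_eq_mul]

theorem two_mul_mul_exp_neg_mul_sq_le_sqrt {K : ℝ} (hK : 0 < K) (t : ℝ) :
    2 * K * t * exp (-(K * t ^ 2)) ≤ √K := by
  have hs : 0 < √K := sqrt_pos.2 hK
  have h1 : 2 * K * t ≤ √K * exp (K * t ^ 2) := by
    have hsq : √K ^ 2 = K := sq_sqrt hK.le
    nlinarith [mul_nonneg hs.le (sq_nonneg (√K * t - 1)), add_one_le_exp (K * t ^ 2)]
  calc 2 * K * t * exp (-(K * t ^ 2)) ≤ √K * exp (K * t ^ 2) * exp (-(K * t ^ 2)) := by gcongr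
    _ = √K := by rw [mul_assoc, ← exp_add, add_neg_cancel, exp_zero, mul_one]

theorem exp_neg_add_div_div_eq (a b lam δ : ℝ) :
    exp (-(a + b / (2 * lam)) / δ) = exp (-a / δ) * exp (-(1 / (2 * lam * δ) * b)) := by
  rw [← exp_add]
  ring_nf

section SoftMoreauKernel

variable {E : Type*} [NormedAddCommGroup E] [InnerProductSpace ℝ E] {f : E → ℝ} {δ lam : ℝ}

theorem hasFDerivAt_exp_neg_add_sq_div (y x : E) :
    HasFDerivAt (fun x => exp (-(f y + ‖x - y‖ ^ 2 / (2 * lam)) / δ))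
      ((exp (-(f y + ‖x - y‖ ^ 2 / (2 * lam)) / δ) * -(1 / (lam * δ))) • innerSL ℝ (x - y)) x := by
  have hsq : HasFDerivAt (fun x => ‖x - y‖ ^ 2) (2 • innerSL ℝ (x - y)) x := by
    simpa using ((hasFDerivAt_id x).sub_const y).norm_sq
  have hexponent : HasFDerivAt (fun x => -(f y + ‖x - y‖ ^ 2 / (2 * lam)) / δ)
      (-(1 / (lam * δ)) • innerSL ℝ (x - y)) x := by
    have hfun : (fun x => -(f y + ‖x - y‖ ^ 2 / (2 * lam)) / δ)
        = fun x => -(1 / (2 * lam * δ)) * ‖x - y‖ ^ 2 + -f y / δ := by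
      funext x
      ring
    rw [hfun]
    refine ((hsq.const_mul _).add_const _).congr_fderiv ?_
    ext w
    simp only [map_sub, smul_apply, nsmul_eq_mul, smul_eq_mul]
    ring
  simpa only [mul_smul] using hexponent.exp

theorem norm_fderiv_exp_neg_add_sq_div_le (hδ : 0 < δ) (hlam : 0 < lam) (x y : E) :
    ‖(exp (-(f y + ‖x - y‖ ^ 2 / (2 * lam)) / δ) * -(1 / (lam * δ))) • innerSL ℝ (x - y)‖
      ≤ √(1 / (2 * lam * δ)) * exp (-f y / δ) := by
  have hK : 0 < 1 / (2 * lam * δ) := by positivity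
  rw [norm_smul, innerSL_apply_norm, norm_mul, norm_neg, norm_of_nonneg (exp_pos _).le,
    norm_of_nonneg (by positivity), exp_neg_add_div_div_eq]
  calc exp (-f y / δ) * exp (-(1 / (2 * lam * δ) * ‖x - y‖ ^ 2)) * (1 / (lam * δ)) * ‖x - y‖
      = exp (-f y / δ) * (2 * (1 / (2 * lam * δ)) * ‖x - y‖ *
          exp (-(1 / (2 * lam * δ) * ‖x - y‖ ^ 2))) := by field_simp
    _ ≤ exp (-f y / δ) * √(1 / (2 * lam * δ)) := by
        gcongr
        exact two_mul_mul_exp_neg_mul_sq_le_sqrt hK _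
    _ = √(1 / (2 * lam * δ)) * exp (-f y / δ) := mul_comm _ _

end SoftMoreauKernel

section SoftMoreau

variable {E : Type*} [NormedAddCommGroup E] [MeasurableSpace E] {μ : Measure E} {f : E → ℝ}
  {δ lam : ℝ}

noncomputable def softMoreauPartition (μ : Measure E) (f : E → ℝ) (δ lam : ℝ) (x : E) : ℝ :=
  ∫ y, exp (-(f y + ‖x - y‖ ^ 2 / (2 * lam)) / δ) ∂μ

/-- With `μ` Lebesgue measure on `ℝ^d` and `c = (2πλδ)^(-d/2)` this is the paper's `f^{λ,δ}`. -/
noncomputable def softMoreauEnvelope (μ : Measure E) (f : E → ℝ) (δ lam c : ℝ) (x : E) : ℝ :=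
  -δ * log (c * softMoreauPartition μ f δ lam x)

variable [BorelSpace E]

theorem integrable_exp_neg_add_sq_div (hf : Measurable f)
    (hint : Integrable (fun y => exp (-f y / δ)) μ) (hδ : 0 < δ) (hlam : 0 < lam) (x : E) :
    Integrable (fun y => exp (-(f y + ‖x - y‖ ^ 2 / (2 * lam)) / δ)) μ := by
  refine hint.mono (by fun_prop) (ae_of_all _ fun y => ?_)
  rw [norm_of_nonneg (exp_pos _).le, norm_of_nonneg (exp_pos _).le, exp_neg_add_div_div_eq]
  exact mul_le_of_le_one_right (exp_pos _).le (exp_le_one_iff.2 (neg_nonpos.2 (by positivity)))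

theorem softMoreauPartition_pos [NeZero μ] (hf : Measurable f)
    (hint : Integrable (fun y => exp (-f y / δ)) μ) (hδ : 0 < δ) (hlam : 0 < lam) (x : E) :
    0 < softMoreauPartition μ f δ lam x :=
  integral_exp_pos (integrable_exp_neg_add_sq_div hf hint hδ hlam x)

variable [InnerProductSpace ℝ E]

theorem differentiable_softMoreauPartition [SecondCountableTopology E] (hf : Measurable f)
    (hint : Integrable (fun y => exp (-f y / δ)) μ) (hδ : 0 < δ) (hlam : 0 < lam) :
    Differentiable ℝ (softMoreauPartition μ f δ lam) := fun x₀ => by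
  have hint' := integrable_exp_neg_add_sq_div hf hint hδ hlam
  exact (hasFDerivAt_integral_of_dominated_of_fderiv_le (𝕜 := ℝ)
    (F' := fun x y => (exp (-(f y + ‖x - y‖ ^ 2 / (2 * lam)) / δ) * -(1 / (lam * δ))) •
      innerSL ℝ (x - y)) Filter.univ_mem
    (.of_forall fun x => (hint' x).aestronglyMeasurable) (hint' x₀) (by fun_prop)
    (ae_of_all _ fun y x _ => norm_fderiv_exp_neg_add_sq_div_le hδ hlam x y) (hint.const_mul _)
    (ae_of_all _ fun y x _ => hasFDerivAt_exp_neg_add_sq_div y x)).differentiableAt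

theorem convexOn_half_sq_add_log_softMoreauPartition [NeZero μ] (hf : Measurable f)
    (hint : Integrable (fun y => exp (-f y / δ)) μ) (hδ : 0 < δ) (hlam : 0 < lam) :
    ConvexOn ℝ univ fun x => 1 / lam / 2 * ‖x‖ ^ 2 + δ * log (softMoreauPartition μ f δ lam x) := by
  set h : E → ℝ := fun y => -f y / δ - ‖y‖ ^ 2 / (2 * lam * δ)
  have htilt : ∀ x y, exp (-(f y + ‖x - y‖ ^ 2 / (2 * lam)) / δ)
      = exp (-‖x‖ ^ 2 / (2 * lam * δ)) * exp (h y + ⟪(lam * δ)⁻¹ • x, y⟫) := fun x y => by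
    rw [← exp_add, norm_sub_sq_real, real_inner_smul_left]
    congr 1
    simp only [h]
    field_simp
    ring
  have hI : ∀ w, Integrable (fun y => exp (h y + ⟪w, y⟫)) μ := fun w => by
    refine ((integrable_exp_neg_add_sq_div hf hint hδ hlam ((lam * δ) • w)).const_mul
      (exp (‖(lam * δ) • w‖ ^ 2 / (2 * lam * δ)))).congr (ae_of_all _ fun y => ?_)
    dsimp only
    rw [htilt, ← mul_assoc, ← exp_add, smul_smul, inv_mul_cancel₀ (by positivity), one_smul,
      neg_div, add_neg_cancel, exp_zero, one_mul]
  have hZ : ∀ x, 1 / lam / 2 * ‖x‖ ^ 2 + δ * log (softMoreauPartition μ f δ lam x)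
      = δ * log (∫ y, exp (h y + ⟪(lam * δ)⁻¹ • x, y⟫) ∂μ) := fun x => by
    rw [softMoreauPartition, integral_congr_ae (ae_of_all _ (htilt x)), integral_const_mul,
      log_mul (exp_pos _).ne' (integral_exp_pos (hI _)).ne', log_exp]
    field_simp
    ring
  simp only [hZ]
  have hlog := (convexOn_log_integral_exp_add_inner h hI).comp_linearMap
    ((lam * δ)⁻¹ • LinearMap.id)
  rw [preimage_univ] at hlog
  exact hlog.smul hδ.le

theorem differentiable_softMoreauEnvelope [SecondCountableTopology E] [NeZero μ]
    (hf : Measurable f) (hint : Integrable (fun y => exp (-f y / δ)) μ) (hδ : 0 < δ)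
    (hlam : 0 < lam) {c : ℝ} (hc : 0 < c) :
    Differentiable ℝ (softMoreauEnvelope μ f δ lam c) := fun x =>
  (((differentiable_softMoreauPartition hf hint hδ hlam x).const_mul c).log
    (mul_pos hc (softMoreauPartition_pos hf hint hδ hlam x)).ne').const_mul (-δ)

theorem convexOn_half_sq_sub_softMoreauEnvelope [NeZero μ] (hf : Measurable f)
    (hint : Integrable (fun y => exp (-f y / δ)) μ) (hδ : 0 < δ) (hlam : 0 < lam)
    {c : ℝ} (hc : 0 < c) :
    ConvexOn ℝ univ fun x => 1 / lam / 2 * ‖x‖ ^ 2 - softMoreauEnvelope μ f δ lam c x := by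
  have hsplit : ∀ x, 1 / lam / 2 * ‖x‖ ^ 2 - softMoreauEnvelope μ f δ lam c x
      = (1 / lam / 2 * ‖x‖ ^ 2 + δ * log (softMoreauPartition μ f δ lam x)) + δ * log c :=
    fun x => by
      rw [softMoreauEnvelope, log_mul hc.ne' (softMoreauPartition_pos hf hint hδ hlam x).ne']
      ring
  simp only [hsplit]
  exact (convexOn_half_sq_add_log_softMoreauPartition hf hint hδ hlam).add_const _

end SoftMoreau

section Smooth

variable {E : Type*} [NormedAddCommGroup E] [InnerProductSpace ℝ E] [CompleteSpace E]
  {F : E → ℝ} {L : ℝ}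

theorem ConvexOn.add_inner_le_of_hasGradientAt {h : E → ℝ} {g x : E}
    (hc : ConvexOn ℝ univ h) (hd : HasGradientAt h g x) (y : E) :
    h x + ⟪g, y - x⟫ ≤ h y := by
  have hline : ConvexOn ℝ univ (h ∘ AffineMap.lineMap (k := ℝ) x y) := by
    simpa using hc.comp_affineMap (AffineMap.lineMap (k := ℝ) x y)
  have hderiv : HasDerivAt (h ∘ AffineMap.lineMap (k := ℝ) x y) ⟪g, y - x⟫ 0 := by
    have := hd.hasFDerivAt.comp_hasDerivAt_of_eq (0 : ℝ) AffineMap.hasDerivAt_lineMap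
      (AffineMap.lineMap_apply_zero x y).symm
    simpa [InnerProductSpace.toDual_apply_apply] using this
  have := hline.le_slope_of_hasDerivAt (mem_univ 0) (mem_univ 1) one_pos hderiv
  simp only [slope_def_field, Function.comp_apply, AffineMap.lineMap_apply_one,
    AffineMap.lineMap_apply_zero, sub_zero, div_one] at this
  linarith

theorem hasGradientAt_half_mul_norm_sq_sub {x : E} (hd : DifferentiableAt ℝ F x) :
    HasGradientAt (fun z => L / 2 * ‖z‖ ^ 2 - F z) (L • x - gradient F x) x := by
  have hq := (hasStrictFDerivAt_norm_sq x).hasFDerivAt.const_mul (L / 2)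
  have := (hq.sub hd.hasGradientAt.hasFDerivAt).hasGradientAt
  convert this using 1
  · rfl
  apply (InnerProductSpace.toDual ℝ E).injective
  ext w
  simp only [map_sub, map_smul, toDual_gradient, sub_apply, smul_apply,
    InnerProductSpace.toDual_apply_apply, smul_eq_mul, map_nsmul,
    LinearIsometryEquiv.apply_symm_apply, coe_innerSL_apply, nsmul_eq_mul]
  ring

theorem le_add_inner_gradient_add_of_convexOn_sub {x : E} (hd : DifferentiableAt ℝ F x)
    (hG : ConvexOn ℝ univ fun z => L / 2 * ‖z‖ ^ 2 - F z) (y : E) :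
    F y ≤ F x + ⟪gradient F x, y - x⟫ + L / 2 * ‖y - x‖ ^ 2 := by
  have h := hG.add_inner_le_of_hasGradientAt (hasGradientAt_half_mul_norm_sq_sub hd) y
  have hy : ‖y‖ ^ 2 = ‖x‖ ^ 2 + 2 * ⟪x, y - x⟫ + ‖y - x‖ ^ 2 := by
    rw [← norm_add_sq_real, add_sub_cancel]
  rw [inner_sub_left, real_inner_smul_left, hy] at h
  linarith

theorem sq_norm_gradient_sub_div_le (hL : 0 < L) (hF : ConvexOn ℝ univ F)
    (hd : Differentiable ℝ F) (hG : ConvexOn ℝ univ fun z => L / 2 * ‖z‖ ^ 2 - F z) (x y : E) :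
    ‖gradient F y - gradient F x‖ ^ 2 / (2 * L) ≤ F y - F x - ⟪gradient F x, y - x⟫ := by
  set v := gradient F y - gradient F x
  have hupper := le_add_inner_gradient_add_of_convexOn_sub (hd y) hG (y - L⁻¹ • v)
  have hlower := hF.add_inner_le_of_hasGradientAt (hd x).hasGradientAt (y - L⁻¹ • v)
  have hv : ⟪gradient F y, v⟫ - ⟪gradient F x, v⟫ = ‖v‖ ^ 2 := by
    rw [← inner_sub_left, real_inner_self_eq_norm_sq]
  rw [sub_sub_cancel_left, inner_neg_right, norm_neg, norm_smul, mul_pow, norm_inv,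
    norm_of_nonneg hL.le, real_inner_smul_right] at hupper
  rw [sub_right_comm, inner_sub_right, real_inner_smul_right] at hlower
  have hquad : L / 2 * ((L⁻¹) ^ 2 * ‖v‖ ^ 2) = ‖v‖ ^ 2 / (2 * L) := by field_simp
  have hlin : L⁻¹ * ⟪gradient F y, v⟫ - L⁻¹ * ⟪gradient F x, v⟫ = 2 * (‖v‖ ^ 2 / (2 * L)) := by
    rw [← mul_sub, hv]; field_simp
  linarith

theorem lipschitzWith_gradient_of_convexOn (hL : 0 < L) (hF : ConvexOn ℝ univ F)
    (hd : Differentiable ℝ F) (hG : ConvexOn ℝ univ fun z => L / 2 * ‖z‖ ^ 2 - F z) :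
    LipschitzWith L.toNNReal (gradient F) := by
  refine LipschitzWith.of_dist_le_mul fun y x => ?_
  rw [dist_eq_norm, dist_eq_norm, coe_toNNReal _ hL.le]
  set v := gradient F y - gradient F x
  have hxy := sq_norm_gradient_sub_div_le hL hF hd hG x y
  have hyx := sq_norm_gradient_sub_div_le hL hF hd hG y x
  rw [norm_sub_rev] at hyx
  have hsum : ‖v‖ ^ 2 / L ≤ ⟪v, y - x⟫ := by
    have hswap : ⟪gradient F y, x - y⟫ = -⟪gradient F y, y - x⟫ := by
      rw [← inner_neg_right, neg_sub]
    rw [inner_sub_left]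
    have h2 : ‖v‖ ^ 2 / L = 2 * (‖v‖ ^ 2 / (2 * L)) := by field_simp
    linarith
  have hcs := real_inner_le_norm v (y - x)
  rcases (norm_nonneg v).eq_or_lt with hv | hv
  · rw [← hv]
    positivity
  · rw [div_le_iff₀ hL] at hsum
    nlinarith

end Smooth

section GradientDescent

variable {E : Type*} [NormedAddCommGroup E] [InnerProductSpace ℝ E] [CompleteSpace E]
  {F : E → ℝ} {lam : ℝ}

def IsGradientDescent (F : E → ℝ) (lam : ℝ) (x : ℕ → E) : Prop :=
  ∀ k, x (k + 1) = x k - lam • gradient F (x k)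

theorem apply_sub_smul_gradient_le (hlam : 0 < lam) {x : E} (hd : DifferentiableAt ℝ F x)
    (hG : ConvexOn ℝ univ fun z => 1 / lam / 2 * ‖z‖ ^ 2 - F z) :
    F (x - lam • gradient F x) ≤ F x - lam / 2 * ‖gradient F x‖ ^ 2 := by
  have h := le_add_inner_gradient_add_of_convexOn_sub hd hG (x - lam • gradient F x)
  rw [sub_sub_cancel_left, inner_neg_right, real_inner_smul_right, real_inner_self_eq_norm_sq,
    norm_neg, norm_smul, mul_pow, norm_of_nonneg hlam.le] at h
  have : 1 / lam / 2 * (lam ^ 2 * ‖gradient F x‖ ^ 2) = lam / 2 * ‖gradient F x‖ ^ 2 := by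
    field_simp
  linarith

theorem two_mul_apply_sub_smul_gradient_sub_le (hlam : 0 < lam) (hF : ConvexOn ℝ univ F)
    {x : E} (hd : DifferentiableAt ℝ F x)
    (hG : ConvexOn ℝ univ fun z => 1 / lam / 2 * ‖z‖ ^ 2 - F z) (z : E) :
    2 * lam * (F (x - lam • gradient F x) - F z)
      ≤ ‖x - z‖ ^ 2 - ‖x - lam • gradient F x - z‖ ^ 2 := by
  have hdecrease := apply_sub_smul_gradient_le hlam hd hG
  have hlower := hF.add_inner_le_of_hasGradientAt hd.hasGradientAt z
  have hexpand : ‖x - lam • gradient F x - z‖ ^ 2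
      = ‖x - z‖ ^ 2 - 2 * lam * ⟪gradient F x, x - z⟫ + lam ^ 2 * ‖gradient F x‖ ^ 2 := by
    rw [sub_right_comm, norm_sub_sq_real, inner_smul_right, norm_smul, mul_pow,
      norm_of_nonneg hlam.le, real_inner_comm]
    ring
  have hzx : ⟪gradient F x, z - x⟫ = -⟪gradient F x, x - z⟫ := by
    rw [← inner_neg_right, neg_sub]
  have key : F (x - lam • gradient F x) - F z
      ≤ ⟪gradient F x, x - z⟫ - lam / 2 * ‖gradient F x‖ ^ 2 := by linarith
  nlinarith [mul_le_mul_of_nonneg_left key (by positivity : (0 : ℝ) ≤ 2 * lam)]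

theorem IsGradientDescent.two_mul_mul_sub_add_sq_le {x : ℕ → E} (hx : IsGradientDescent F lam x)
    (hlam : 0 < lam) (hF : ConvexOn ℝ univ F) (hd : Differentiable ℝ F)
    (hG : ConvexOn ℝ univ fun z => 1 / lam / 2 * ‖z‖ ^ 2 - F z) (z : E) (k : ℕ) :
    2 * lam * k * (F (x k) - F z) + ‖x k - z‖ ^ 2 ≤ ‖x 0 - z‖ ^ 2 := by
  induction k with
  | zero => simp
  | succ k ih =>
    have hstep := two_mul_apply_sub_smul_gradient_sub_le hlam hF (hd (x k)) hG z
    have hdecrease := apply_sub_smul_gradient_le hlam (hd (x k)) hG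
    rw [← hx k] at hstep hdecrease
    have hmono : 2 * lam * k * (F (x (k + 1)) - F z) ≤ 2 * lam * k * (F (x k) - F z) := by
      gcongr
      nlinarith [sq_nonneg ‖gradient F (x k)‖]
    push_cast
    linarith

end GradientDescent

theorem Metric.le_sq_infDist {X : Type*} [PseudoMetricSpace X] {s : Set X} {x : X} {c : ℝ}
    (hs : s.Nonempty) (h : ∀ y ∈ s, c ≤ dist x y ^ 2) : c ≤ infDist x s ^ 2 :=
  (sqrt_le_iff.1 ((le_infDist hs).2 fun y hy => sqrt_le_iff.2 ⟨dist_nonneg, h y hy⟩)).2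

theorem zoppa_convex_rate_general {d : ℕ}
    (f : EuclideanSpace ℝ (Fin d) → ℝ) (hf : Continuous f)
    (δ lam : ℝ) (hδ : 0 < δ) (hlam : 0 < lam)
    (hint : Integrable (fun y : EuclideanSpace ℝ (Fin d) => Real.exp (-f y / δ)))
    (F : EuclideanSpace ℝ (Fin d) → ℝ)
    (hF : ∀ x, F x = -δ * Real.log ((2 * Real.pi * lam * δ) ^ (-(d : ℝ) / 2) *
          ∫ y : EuclideanSpace ℝ (Fin d),
            Real.exp (-(f y + ‖x - y‖ ^ 2 / (2 * lam)) / δ)))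
    (hconv : ConvexOn ℝ Set.univ F)
    (Xstar : Set (EuclideanSpace ℝ (Fin d)))
    (hXstar : Xstar = {z | ∀ w, F z ≤ F w})
    (hne : Xstar.Nonempty)
    (x : ℕ → EuclideanSpace ℝ (Fin d))
    (hiter : ∀ k : ℕ, x (k + 1) = x k - lam • gradient F (x k)) :
    LipschitzWith (Real.toNNReal (1 / lam)) (gradient F) ∧
      ∀ xstar ∈ Xstar, ∀ k : ℕ, 1 ≤ k →
        F (x k) - F xstar ≤ (Metric.infDist (x 0) Xstar) ^ 2 / (2 * lam * k) := by
  have hc : 0 < (2 * π * lam * δ) ^ (-(d : ℝ) / 2) := by positivity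
  obtain rfl : F = softMoreauEnvelope volume f δ lam ((2 * π * lam * δ) ^ (-(d : ℝ) / 2)) :=
    funext hF
  have hd := differentiable_softMoreauEnvelope hf.measurable hint hδ hlam hc
  have hG := convexOn_half_sq_sub_softMoreauEnvelope hf.measurable hint hδ hlam hc
  refine ⟨lipschitzWith_gradient_of_convexOn (one_div_pos.2 hlam) hconv hd hG, ?_⟩
  subst hXstar
  intro xstar hxstar k hk
  have hscale : 0 < 2 * lam * (k : ℝ) := mul_pos (by positivity) (Nat.cast_pos.2 hk)
  rw [le_div_iff₀' hscale]
  refine Metric.le_sq_infDist hne fun z hz => ?_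
  have hrate := IsGradientDescent.two_mul_mul_sub_add_sq_le hiter hlam hconv hd hG z k
  rw [le_antisymm (hz xstar) (hxstar z)] at hrate
  rw [dist_eq_norm]
  linarith [sq_nonneg ‖x k - z‖]

/-- If the soft Moreau envelope `F = f^{λ,δ}` is convex, then it is `(1/λ)`-smooth and
ZOPPA (gradient descent on `F` with stepsize `λ`) satisfies
`F(x^k) - min F ≤ dist(x⁰, X⋆)²/(2λk)` for all `k ≥ 1`. -/
theorem zoppa_convex_rate {d : ℕ}
    (f : EuclideanSpace ℝ (Fin d) → ℝ) (hf : Continuous f)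
    (hbdd : ∃ c : ℝ, ∀ x, c ≤ f x)
    (δ lam : ℝ) (hδ : 0 < δ) (hlam : 0 < lam)
    (hint : Integrable (fun y : EuclideanSpace ℝ (Fin d) => Real.exp (-f y / δ)))
    (F : EuclideanSpace ℝ (Fin d) → ℝ)
    (hF : ∀ x, F x = -δ * Real.log ((2 * Real.pi * lam * δ) ^ (-(d : ℝ) / 2) *
          ∫ y : EuclideanSpace ℝ (Fin d),
            Real.exp (-(f y + ‖x - y‖ ^ 2 / (2 * lam)) / δ)))
    (hconv : ConvexOn ℝ Set.univ F)
    (Xstar : Set (EuclideanSpace ℝ (Fin d)))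
    (hXstar : Xstar = {z | ∀ w, F z ≤ F w})
    (hne : Xstar.Nonempty)
    (x : ℕ → EuclideanSpace ℝ (Fin d))
    (hiter : ∀ k : ℕ, x (k + 1) = x k - lam • gradient F (x k)) :
    LipschitzWith (Real.toNNReal (1 / lam)) (gradient F) ∧
      ∀ xstar ∈ Xstar, ∀ k : ℕ, 1 ≤ k →
        F (x k) - F xstar ≤ (Metric.infDist (x 0) Xstar) ^ 2 / (2 * lam * k) :=
  zoppa_convex_rate_general f hf δ lam hδ hlam hint F hF hconv Xstar hXstar hne x hiter
end
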